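/- Assume Ster is exactly the set of leaves of the tree. The map sending a list of states [z₀, …, z_f] to the list of configurations [{z₀}, …, {z_f}] is a length-preserving bijection from the set of plays of the tree game (lists with z₀ = s₀, child zᵢ zᵢ₊₁ for all i < f, and z_f ∈ Ster) onto the set of complete trials of the token game (lists of configurations [c₀, …, c_f] with c₀ = {s₀}, Step cᵢ cᵢ₊₁ for all i < f, and c_f having no Step-successor). (This is the core of Theorem 1: for every line of play of the original finite deterministic perfect-information game there is exactly one equivalent trial of the constructed Ludii game, and conversely.) -/

import Mathlib

/-- The child relation of the game tree: `a` is the parent of `b`, i.e. `f b = a`. -/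
def Child {S : Type*} (s₀ : S) (f : ∀ s : S, s ≠ s₀ → S) (a b : S) : Prop :=
  ∃ h : b ≠ s₀, f b h = a

/-- Total version of the parent function (sending the root to itself). -/
def parentMap {S : Type*} [DecidableEq S] (s₀ : S) (f : ∀ s : S, s ≠ s₀ → S) (s : S) : S :=
  if h : s = s₀ then s₀ else f s h

/-- One step of the constructed Ludii token game: the token is removed from a
non-terminal vertex `v` of the configuration and placed on a child `w` of `v`. -/
def Step {S : Type*} [DecidableEq S] (s₀ : S) (Ster : Set S) (f : ∀ s : S, s ≠ s₀ → S)
    (c c' : Finset S) : Prop :=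
  ∃ v ∈ c, v ∉ Ster ∧ ∃ w, ∃ h : w ≠ s₀, f w h = v ∧ c' = insert w (c.erase v)

/-- A play of the tree game: a list `[z₀, …, z_f]` with `z₀ = s₀`, consecutive
states related by the child relation, and `z_f ∈ Ster`. -/
def IsPlay {S : Type*} (s₀ : S) (Ster : Set S) (f : ∀ s : S, s ≠ s₀ → S)
    (l : List S) : Prop :=
  l.head? = some s₀ ∧ l.Chain' (Child s₀ f) ∧ ∃ z ∈ Ster, l.getLast? = some z

/-- A complete trial of the token game: a list of configurations `[c₀, …, c_f]`
with `c₀ = {s₀}`, consecutive configurations related by `Step`, and `c_f` having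
no `Step`-successor. -/
def IsTrial {S : Type*} [DecidableEq S] (s₀ : S) (Ster : Set S)
    (f : ∀ s : S, s ≠ s₀ → S) (L : List (Finset S)) : Prop :=
  L.head? = some {s₀} ∧ L.Chain' (Step s₀ Ster f) ∧
    ∃ c : Finset S, L.getLast? = some c ∧ ∀ c' : Finset S, ¬ Step s₀ Ster f c c'

/-! A configuration reachable from `{s₀}` always carries a single token, and on singletons
`Step {a} {b}` is exactly `Child a b` once the terminal states are the leaves; so trials are
precisely the images of plays, and the map is injective because `Finset.singleton` is. -/

section TokenGame

variable {S : Type*} [DecidableEq S] {s₀ : S} {Ster : Set S} {f : ∀ s : S, s ≠ s₀ → S}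

lemma step_singleton_iff {a : S} {c' : Finset S} :
    Step s₀ Ster f {a} c' ↔ a ∉ Ster ∧ ∃ w, Child s₀ f a w ∧ c' = {w} := by
  constructor
  · rintro ⟨v, hv, hvt, w, hw, hfw, rfl⟩
    obtain rfl := Finset.mem_singleton.mp hv
    exact ⟨hvt, w, ⟨hw, hfw⟩, by simp⟩
  · rintro ⟨ha, w, ⟨hw, hfw⟩, rfl⟩
    exact ⟨a, Finset.mem_singleton_self a, ha, w, hw, hfw, by simp⟩

lemma exists_map_singleton_of_isChain_step {z : S} {L : List (Finset S)}
    (h : (({z} : Finset S) :: L).IsChain (Step s₀ Ster f)) :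
    ∃ l : List S, ({z} : Finset S) :: L = l.map (fun z : S => ({z} : Finset S)) := by
  induction L generalizing z with
  | nil => exact ⟨[z], rfl⟩
  | cons c L ih =>
    obtain ⟨hstep, hchain⟩ := List.isChain_cons_cons.mp h
    obtain ⟨-, w, -, rfl⟩ := step_singleton_iff.mp hstep
    obtain ⟨l, hl⟩ := ih hchain
    exact ⟨z :: l, by rw [List.map_cons, ← hl]⟩

lemma exists_map_singleton_of_isTrial {L : List (Finset S)} (hL : IsTrial s₀ Ster f L) :
    ∃ l : List S, L = l.map (fun z : S => ({z} : Finset S)) := by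
  obtain ⟨hhead, hchain, -⟩ := hL
  obtain ⟨T, rfl⟩ : ∃ T, L = {s₀} :: T := List.head?_eq_some_iff.mp hhead
  exact exists_map_singleton_of_isChain_step hchain

variable (hleaf : Ster = {s : S | ∀ w : S, ¬ Child s₀ f s w})
include hleaf

lemma step_singleton_singleton_iff {a b : S} :
    Step s₀ Ster f {a} {b} ↔ Child s₀ f a b := by
  rw [step_singleton_iff]
  constructor
  · rintro ⟨-, w, hw, hwb⟩
    rwa [Finset.singleton_injective hwb]
  · intro hab
    refine ⟨fun ha => ?_, b, hab, rfl⟩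
    rw [hleaf] at ha
    exact ha b hab

lemma forall_not_step_singleton_iff {z : S} :
    (∀ c' : Finset S, ¬ Step s₀ Ster f {z} c') ↔ z ∈ Ster := by
  refine ⟨fun h => ?_, fun hz c' hstep => (step_singleton_iff.mp hstep).1 hz⟩
  by_contra hz
  obtain ⟨w, hw⟩ : ∃ w, Child s₀ f z w := by
    by_contra! hleafz
    exact hz (hleaf ▸ hleafz)
  exact h {w} (step_singleton_iff.mpr ⟨hz, w, hw, rfl⟩)

lemma isTrial_map_singleton_iff (l : List S) :
    IsTrial s₀ Ster f (l.map (fun z : S => ({z} : Finset S))) ↔ IsPlay s₀ Ster f l := by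
  unfold IsTrial IsPlay
  refine and_congr ?_ (and_congr ?_ ?_)
  · simp [Option.map_eq_some_iff, eq_comm]
  · exact (List.isChain_map _).trans
      (List.IsChain.iff fun _ _ => step_singleton_singleton_iff hleaf)
  · rw [List.getLast?_map]
    constructor
    · rintro ⟨c, hc, hnc⟩
      obtain ⟨z, hz, rfl⟩ := Option.map_eq_some_iff.mp hc
      exact ⟨z, (forall_not_step_singleton_iff hleaf).mp hnc, hz⟩
    · rintro ⟨z, hz, hlast⟩
      exact ⟨{z}, by rw [hlast]; rfl, (forall_not_step_singleton_iff hleaf).mpr hz⟩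

end TokenGame

theorem plays_biject_trials_general {S : Type*} [DecidableEq S]
    (s₀ : S) (Ster : Set S) (f : ∀ s : S, s ≠ s₀ → S)
    (hleaf : Ster = {s : S | ∀ w : S, ¬ Child s₀ f s w}) :
    Set.BijOn (List.map (fun z : S => ({z} : Finset S)))
      {l : List S | IsPlay s₀ Ster f l}
      {L : List (Finset S) | IsTrial s₀ Ster f L} ∧
    ∀ l : List S, (l.map (fun z : S => ({z} : Finset S))).length = l.length := by
  refine ⟨⟨fun l hl => (isTrial_map_singleton_iff hleaf l).mpr hl,
    (List.map_injective_iff.mpr Finset.singleton_injective).injOn, ?_⟩, fun l => l.length_map _⟩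
  intro L hL
  obtain ⟨l, rfl⟩ := exists_map_singleton_of_isTrial hL
  exact ⟨l, (isTrial_map_singleton_iff hleaf l).mp hL, rfl⟩

/-- The map `[z₀, …, z_f] ↦ [{z₀}, …, {z_f}]` is a length-preserving bijection
from the plays of the tree game onto the complete trials of the token game. -/
theorem plays_biject_trials {S : Type*} [Fintype S] [DecidableEq S]
    (s₀ : S) (Ster : Set S) (f : ∀ s : S, s ≠ s₀ → S)
    (hroot : ∀ s : S, Relation.ReflTransGen (Child s₀ f) s₀ s)
    (hterm : ∀ s : S, ∃ n : ℕ, (parentMap s₀ f)^[n] s = s₀)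
    (hleaf : Ster = {s : S | ∀ w : S, ¬ Child s₀ f s w}) :
    Set.BijOn (List.map (fun z : S => ({z} : Finset S)))
      {l : List S | IsPlay s₀ Ster f l}
      {L : List (Finset S) | IsTrial s₀ Ster f L} ∧
    ∀ l : List S, (l.map (fun z : S => ({z} : Finset S))).length = l.length :=
  plays_biject_trials_general s₀ Ster f hleaf
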